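/- (Finite-horizon non-stationary telescoping.) Let π_K, …, π_1 be policies and let f_K, …, f_1, f_0 : S×A → ℝ with f_0 ≡ 0. Denote by π_{K:1} the non-stationary policy that takes a_t ~ π_{K−t}(·|s_t) for 0 ≤ t ≤ K−1. Then J_{f_K}(π_K) − J_K(π_{K:1}) = Σ_{t=0}^{K−1} γ^t E_{(s,a)~d_t^{π_{K:1}}}[f_{K−t}(s,a) − (T^{π_{K−t−1}} f_{K−t−1})(s,a)], where for the t = K−1 term (T^{π_0} f_0)(s,a) = R(s,a) since f_0 ≡ 0 (the choice of π_0 is immaterial). -/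
import Mathlib


open scoped BigOperators

noncomputable section

/-- The policy-specific Bellman operator. -/
def bellmanOp {S A : Type*} [Fintype S] [Fintype A] (P : S → A → S → ℝ)
    (R : S → A → ℝ) (γ : ℝ) (pol : S → A → ℝ) (f : S → A → ℝ) : S → A → ℝ :=
  fun s a => R s a + γ * ∑ s', P s a s' * ∑ a', pol s' a' * f s' a'

/-- Time-`t` state-action distribution of a non-stationary policy `pols`,
where `pols t` is the policy used at time `t`. -/
def occNS {S A : Type*} [Fintype S] [Fintype A] (P : S → A → S → ℝ)
    (pols : ℕ → S → A → ℝ) (d0 : S → ℝ) : ℕ → S → A → ℝ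
  | 0 => fun s a => d0 s * pols 0 s a
  | (t + 1) => fun s' a' =>
      (∑ s, ∑ a, occNS P pols d0 t s a * P s a s') * pols (t + 1) s' a'

/-- Truncated `K`-step discounted return `J_K = E[Σ_{t<K} γ^t r_t]` of a
non-stationary policy. -/
def JKret {S A : Type*} [Fintype S] [Fintype A] (P : S → A → S → ℝ)
    (R : S → A → ℝ) (γ : ℝ) (pols : ℕ → S → A → ℝ) (d0 : S → ℝ) (K : ℕ) : ℝ :=
  ∑ t ∈ Finset.range K, γ ^ t * ∑ s, ∑ a, occNS P pols d0 t s a * R s a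

/-- `J_f(π) = E_{s~d0}[f(s,π)]`. -/
def Jf {S A : Type*} [Fintype S] [Fintype A] (d0 : S → ℝ) (pol : S → A → ℝ)
    (f : S → A → ℝ) : ℝ :=
  ∑ s, d0 s * ∑ a, pol s a * f s a

lemma step_eq {S A : Type*} [Fintype S] [Fintype A]
    (P : S → A → S → ℝ) (pol : S → A → ℝ) (g : S → A → ℝ) (occ : S → A → ℝ) :
    ∑ s', ∑ a', ((∑ s, ∑ a, occ s a * P s a s') * pol s' a') * g s' a'
      = ∑ s, ∑ a, occ s a * ∑ s', P s a s' * ∑ a', pol s' a' * g s' a' := by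
  have L : ∀ s', ∑ a', ((∑ s, ∑ a, occ s a * P s a s') * pol s' a') * g s' a'
      = ∑ s, ∑ a, occ s a * (P s a s' * ∑ a', pol s' a' * g s' a') := by
    intro s'
    simp_rw [mul_assoc]
    rw [← Finset.mul_sum, Finset.sum_mul]
    refine Finset.sum_congr rfl fun s _ => ?_
    rw [Finset.sum_mul]
    refine Finset.sum_congr rfl fun a _ => ?_
    ring
  simp_rw [L]
  rw [Finset.sum_comm]
  refine Finset.sum_congr rfl fun s _ => ?_
  rw [Finset.sum_comm]
  refine Finset.sum_congr rfl fun a _ => ?_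
  rw [Finset.mul_sum]

/-- **Finite-horizon non-stationary telescoping.** For policies `π_K, …, π_1`,
functions `f_K, …, f_1, f_0` with `f_0 ≡ 0`, and the non-stationary policy
`π_{K:1}` taking `a_t ~ π_{K−t}(·|s_t)`:
`J_{f_K}(π_K) − J_K(π_{K:1}) = Σ_{t<K} γ^t E_{d_t^{π_{K:1}}}[f_{K−t} − T^{π_{K−t−1}} f_{K−t−1}]`. -/
theorem finite_horizon_nonstationary_telescoping {S A : Type*} [Fintype S] [Fintype A]
    (P : S → A → S → ℝ) (R : S → A → ℝ) (Rmax γ : ℝ) (d0 : S → ℝ)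
    (hP0 : ∀ s a s', 0 ≤ P s a s') (hP1 : ∀ s a, ∑ s', P s a s' = 1)
    (hR : ∀ s a, 0 ≤ R s a ∧ R s a ≤ Rmax)
    (hγ0 : 0 ≤ γ) (hγ1 : γ < 1)
    (hd00 : ∀ s, 0 ≤ d0 s) (hd01 : ∑ s, d0 s = 1)
    (K : ℕ) (hK : 1 ≤ K)
    (pols : ℕ → S → A → ℝ)
    (hpols0 : ∀ k s a, 0 ≤ pols k s a) (hpols1 : ∀ k s, ∑ a, pols k s a = 1)
    (f : ℕ → S → A → ℝ) (hf0 : ∀ s a, f 0 s a = 0) :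
    Jf d0 (pols K) (f K) - JKret P R γ (fun t => pols (K - t)) d0 K =
      ∑ t ∈ Finset.range K, γ ^ t *
        ∑ s, ∑ a, occNS P (fun t => pols (K - t)) d0 t s a *
          (f (K - t) s a - bellmanOp P R γ (pols (K - t - 1)) (f (K - t - 1)) s a) := by
  classical
  set occ := occNS P (fun t => pols (K - t)) d0 with hocc
  set g : ℕ → ℝ := fun t => γ ^ t * ∑ s, ∑ a, occ t s a * f (K - t) s a with hg
  have key : ∀ t ∈ Finset.range K,
      γ ^ t * (∑ s, ∑ a, occ t s a *
        (f (K - t) s a - bellmanOp P R γ (pols (K - t - 1)) (f (K - t - 1)) s a))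
      = (g t - g (t + 1)) - γ ^ t * ∑ s, ∑ a, occ t s a * R s a := by
    intro t _
    have h1 : ∑ s', ∑ a', occ (t + 1) s' a' * f (K - (t + 1)) s' a'
        = ∑ s, ∑ a, occ t s a *
            ∑ s', P s a s' * ∑ a', pols (K - t - 1) s' a' * f (K - t - 1) s' a' := by
      have : ∀ s' a', occ (t + 1) s' a'
          = (∑ s, ∑ a, occ t s a * P s a s') * pols (K - (t + 1)) s' a' := by
        intro s' a'; rw [hocc]; rfl
      simp_rw [this, Nat.sub_sub K t 1]
      simpa [mul_assoc] using step_eq P (pols (K - (t + 1))) (f (K - (t + 1)))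
        (fun s a => occ t s a)
    have h2 : g (t + 1) = γ ^ (t + 1) * ∑ s', ∑ a', occ (t + 1) s' a' * f (K - (t + 1)) s' a' := rfl
    rw [h2, h1]
    simp only [hg, bellmanOp]
    simp_rw [Finset.mul_sum]
    rw [← Finset.sum_sub_distrib, ← Finset.sum_sub_distrib]
    refine Finset.sum_congr rfl fun s _ => ?_
    rw [← Finset.sum_sub_distrib, ← Finset.sum_sub_distrib]
    refine Finset.sum_congr rfl fun a _ => ?_
    set C := ∑ x, ∑ i, γ * (P s a x * (pols (K - t - 1) x i * f (K - t - 1) x i)) with hC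
    have hsum : γ ^ t * (occ t s a * C)
        = ∑ x, ∑ i, γ ^ (t + 1) *
            (occ t s a * (P s a x * (pols (K - t - 1) x i * f (K - t - 1) x i))) := by
      simp only [hC, Finset.mul_sum]
      exact Finset.sum_congr rfl fun x _ => Finset.sum_congr rfl fun i _ => by ring
    rw [← hsum]
    ring
  rw [Finset.sum_congr rfl key]
  have htel : ∑ t ∈ Finset.range K, (g t - g (t + 1)) = g 0 - g K :=
    Finset.sum_range_sub' g K
  rw [Finset.sum_sub_distrib, htel]
  have hgK : g K = 0 := by
    simp [hg, hf0]
  have hg0 : g 0 = Jf d0 (pols K) (f K) := by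
    have : ∀ s a, occ 0 s a = d0 s * pols K s a := by
      intro s a; rw [hocc]; simp [occNS]
    simp only [hg, pow_zero, one_mul, this, Jf, Nat.sub_zero]
    exact Finset.sum_congr rfl fun s _ => by rw [Finset.mul_sum]; exact Finset.sum_congr rfl fun a _ => by ring
  rw [hgK, hg0, JKret]
  ring
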